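/- arXiv:2601.12835 — 7 statements merged into one kernel-verified Lean document; each statement's English description precedes it below -/
import Mathlib

section
/- Consider two agents with identical additive valuations and three goods per round: in every round t ∈ {1,2,3}, goods worth 0, 1, and 3 arrive. Then no allocation sequence (assigning each round's goods immediately) satisfies TEFX at all of rounds 1, 2, and 3. -/
/-!
Let `y` be the agent holding the worthless good of round 1 and `x` the other one. EFX for `y` at
that good gives `v(y) ≤ v(x)` at every round, and EFX for `x` at any good `g` it holds gives
`v(x) - v(g) ≤ v(y)`; as the goods of the first `t` rounds are worth `4t` in total,
`2t ≤ v(x) ≤ 2t + v(g)/2`. In round 1 this forces `x` to hold the 3-good and `v(x) = 3`; in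
round 2 the new goods of `x` must then be worth exactly 1, so `x` takes the new 1-good and
`v(x) = 4`; in round 3 that 1-good pins `v(x)` to `[6, 6.5]`, while `x` can only add 0, 1, 3 or 4
to its value 4.
-/

open Finset

abbrev goodValue (p : Fin 3 × Fin 3) : ℝ := ![0, 1, 3] p.2

def arrived (t : Fin 3) : Finset (Fin 3 × Fin 3) := univ.filter (·.1 ≤ t)

lemma sum_goodValue_of_forall_fst_eq {s : Finset (Fin 3 × Fin 3)} {r : Fin 3}
    (hs : ∀ p ∈ s, p.1 = r) :
    ∑ p ∈ s, goodValue p = (if (r, 1) ∈ s then 1 else 0) + (if (r, 2) ∈ s then 3 else 0) := by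
  have hsub : s ⊆ {(r, 0), (r, 1), (r, 2)} := fun p hp => by
    obtain ⟨a, b⟩ := p
    obtain rfl : a = r := hs _ hp
    fin_cases b <;> simp
  calc ∑ p ∈ s, goodValue p
      = ∑ p ∈ {(r, 0), (r, 1), (r, 2)}, if p ∈ s then goodValue p else 0 := by
        rw [sum_ite_mem, inter_eq_right.mpr hsub]
    _ = _ := by rw [sum_insert (by simp), sum_insert (by simp), sum_singleton]; simp [goodValue]

lemma sum_goodValue_arrived (t : Fin 3) : ∑ p ∈ arrived t, goodValue p = 4 * ((t : ℕ) + 1) := by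
  fin_cases t <;> simp [arrived, sum_filter, Fintype.sum_prod_type, Fin.sum_univ_three, goodValue]
    <;> norm_num

lemma Finset.disjoint_sdiff_of_union_eq {α : Type*} [DecidableEq α] {X Y X' Y' P : Finset α}
    (hY : Y ⊆ Y') (hd : Disjoint X' Y') (hc : X ∪ Y = P) : Disjoint (X' \ X) P :=
  disjoint_left.mpr fun g hg hgP => by
    obtain ⟨hgX', hgX⟩ := mem_sdiff.mp hg
    rw [← hc, mem_union, or_iff_right hgX] at hgP
    exact disjoint_left.mp hd hgX' (hY hgP)

lemma two_mul_sum_goodValue_le {B C : Finset (Fin 3 × Fin 3)} {t : Fin 3}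
    (hcover : B ∪ C = arrived t) (hdisj : Disjoint B C) {g : Fin 3 × Fin 3} (hg : g ∈ B)
    (hefx : ∑ p ∈ B.erase g, goodValue p ≤ ∑ p ∈ C, goodValue p) :
    2 * ∑ p ∈ B, goodValue p ≤ 4 * ((t : ℕ) + 1) + goodValue g := by
  rw [sum_erase_eq_sub hg] at hefx
  have htotal := sum_union hdisj (f := goodValue)
  rw [hcover, sum_goodValue_arrived] at htotal
  linarith

section TwoAgents

variable {X Y : Fin 3 → Finset (Fin 3 × Fin 3)}
  (hcover : ∀ t, X t ∪ Y t = arrived t) (hdisj : ∀ t, Disjoint (X t) (Y t))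

include hcover in
lemma fst_le_of_mem {t : Fin 3} {p : Fin 3 × Fin 3} (hp : p ∈ X t) : p.1 ≤ t := by
  have hp' : p ∈ arrived t := hcover t ▸ mem_union_left (Y t) hp
  simpa [arrived] using hp'

include hcover hdisj in
lemma sum_goodValue_of_succ (hX : Monotone X) (hY : Monotone Y) {s t : Fin 3}
    (hst : (t : ℕ) = s + 1) :
    ∑ p ∈ X t, goodValue p = ∑ p ∈ X s, goodValue p
      + ((if (t, 1) ∈ X t then 1 else 0) + (if (t, 2) ∈ X t then 3 else 0)) := by
  have hle : s ≤ t := by omega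
  have hold : ∀ k, (t, k) ∉ X s := fun k hk => by
    have : t ≤ s := fst_le_of_mem hcover hk
    omega
  rw [← sum_sdiff (hX hle), add_comm, sum_goodValue_of_forall_fst_eq (s := X t \ X s) (r := t)]
  · simp only [mem_sdiff, hold, not_false_eq_true, and_true]
  intro p hp
  have hnew : p ∉ arrived s :=
    disjoint_left.mp (disjoint_sdiff_of_union_eq (hY hle) (hdisj t) (hcover s)) hp
  have := fst_le_of_mem hcover (mem_sdiff.mp hp).1
  simp only [arrived, mem_filter, mem_univ, true_and] at hnew
  omega

include hcover hdisj in
theorem false_of_tefx (hX : Monotone X) (hY : Monotone Y)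
    (hefxX : ∀ t, ∀ g ∈ X t, ∑ p ∈ (X t).erase g, goodValue p ≤ ∑ p ∈ Y t, goodValue p)
    (hefxY : ∀ t, ∀ g ∈ Y t, ∑ p ∈ (Y t).erase g, goodValue p ≤ ∑ p ∈ X t, goodValue p)
    (h00 : (0, 0) ∈ Y 0) : False := by
  have hlow : ∀ t : Fin 3, 2 * ((t : ℕ) + 1) ≤ ∑ p ∈ X t, goodValue p := fun t => by
    have hzero := two_mul_sum_goodValue_le ((union_comm _ _).trans (hcover t)) (hdisj t).symm
      (hY (Fin.zero_le t) h00) (hefxY t _ (hY (Fin.zero_le t) h00))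
    have htotal := sum_union (hdisj t) (f := goodValue)
    rw [hcover t, sum_goodValue_arrived] at htotal
    simp only [goodValue, Matrix.cons_val_zero, add_zero] at hzero
    linarith
  have hhigh : ∀ (t : Fin 3) (r k : Fin 3), (r, k) ∈ X t →
      2 * ∑ p ∈ X t, goodValue p ≤ 4 * ((t : ℕ) + 1) + (![0, 1, 3] : Fin 3 → ℝ) k :=
    fun t _ _ hg => two_mul_sum_goodValue_le (hcover t) (hdisj t) hg (hefxX t _ hg)
  have hv0 : ∑ p ∈ X 0, goodValue p
      = (if (0, 1) ∈ X 0 then 1 else 0) + (if (0, 2) ∈ X 0 then 3 else 0) :=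
    sum_goodValue_of_forall_fst_eq fun p hp => le_antisymm (fst_le_of_mem hcover hp) (Fin.zero_le _)
  have hv1 := sum_goodValue_of_succ hcover hdisj hX hY (s := 0) (t := 1) rfl
  have hv2 := sum_goodValue_of_succ hcover hdisj hX hY (s := 1) (t := 2) rfl
  have hlow0 := hlow 0
  have hlow1 := hlow 1
  have hlow2 := hlow 2
  norm_num at hlow0 hlow1 hlow2
  have h02 : (0, 2) ∈ X 0 := by
    by_contra h
    rw [if_neg h] at hv0
    split_ifs at hv0 <;> linarith
  have hhigh0 := hhigh 0 0 2 h02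
  have hhigh1 := hhigh 1 0 2 (hX (Fin.zero_le 1) h02)
  rw [if_pos h02] at hv0
  have h11 : (1, 1) ∈ X 1 := by
    by_contra h
    rw [if_neg h] at hv1
    norm_num [Matrix.cons_val_two] at hhigh0 hhigh1
    split_ifs at hv0 hv1 <;> linarith
  have hhigh2 := hhigh 2 1 1 (hX (by decide) h11)
  rw [if_pos h11] at hv1
  norm_num [Matrix.cons_val_two] at hhigh0 hhigh1 hhigh2
  split_ifs at hv0 hv1 hv2 <;> linarith

end TwoAgents

/-- Identical days, two agents with identical valuations, three goods valued
`0, 1, 3` arriving each of the three rounds: no allocation sequence is TEFX at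
all rounds. A good is a pair (round, index); its value is `![0,1,3] index`. -/
theorem stmt4 :
    ¬ ∃ A : Fin 3 → Fin 2 → Finset (Fin 3 × Fin 3),
      (∀ t : Fin 3, A t 0 ∪ A t 1 =
        Finset.univ.filter (fun p : Fin 3 × Fin 3 => p.1 ≤ t)) ∧
      (∀ t : Fin 3, Disjoint (A t 0) (A t 1)) ∧
      (∀ t t' : Fin 3, t ≤ t' → ∀ i : Fin 2, A t i ⊆ A t' i) ∧
      (∀ t : Fin 3, ∀ i j : Fin 2, ∀ g ∈ A t j,
        ((A t j).erase g).sum (fun p => (![0, 1, 3] : Fin 3 → ℝ) p.2)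
          ≤ (A t i).sum (fun p => (![0, 1, 3] : Fin 3 → ℝ) p.2)) := by
  rintro ⟨A, hcover, hdisj, hmono, hefx⟩
  have hA : ∀ i, Monotone (A · i) := fun i _ _ h => hmono _ _ h i
  have h00 : ((0, 0) : Fin 3 × Fin 3) ∈ A 0 0 ∪ A 0 1 := by simp [hcover]
  rcases mem_union.mp h00 with h | h
  · exact false_of_tefx (fun t => (union_comm _ _).trans (hcover t)) (fun t => (hdisj t).symm)
      (hA 1) (hA 0) (hefx · 0 1) (hefx · 1 0) h
  · exact false_of_tefx hcover hdisj (hA 0) (hA 1) (hefx · 1 0) (hefx · 0 1) h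
end

section
/- Consider two agents with identical additive valuations and three goods per round valued 1, 3, and 10. Then no allocation sequence satisfies TMMS at rounds 1, 2, and 3: any TMMS allocation after round 1 splits {1,3} vs {10}, after round 2 must give each agent one full round's worth {1,3,10}, and these two constraints are incompatible with achieving the maximin share after round 3. -/
set_option maxHeartbeats 2000000 in
/-- Identical days, two agents with identical valuations, three goods valued
`1, 3, 10` arriving each of the three rounds: no allocation sequence is TMMS
at all rounds. TMMS at round `t`: the minimum bundle value is at least
`min (v B) (v (Oᵗ \ B))` for every `B ⊆ Oᵗ` (i.e., at least the maximin share). -/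
theorem stmt5 :
    ¬ ∃ A : Fin 3 → Fin 2 → Finset (Fin 3 × Fin 3),
      (∀ t : Fin 3, A t 0 ∪ A t 1 =
        Finset.univ.filter (fun p : Fin 3 × Fin 3 => p.1 ≤ t)) ∧
      (∀ t : Fin 3, Disjoint (A t 0) (A t 1)) ∧
      (∀ t t' : Fin 3, t ≤ t' → ∀ i : Fin 2, A t i ⊆ A t' i) ∧
      (∀ t : Fin 3,
        ∀ B ⊆ Finset.univ.filter (fun p : Fin 3 × Fin 3 => p.1 ≤ t),
          min (B.sum (fun p => (![1, 3, 10] : Fin 3 → ℝ) p.2))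
              (((Finset.univ.filter (fun p : Fin 3 × Fin 3 => p.1 ≤ t)) \ B).sum
                (fun p => (![1, 3, 10] : Fin 3 → ℝ) p.2))
            ≤ min ((A t 0).sum (fun p => (![1, 3, 10] : Fin 3 → ℝ) p.2))
                  ((A t 1).sum (fun p => (![1, 3, 10] : Fin 3 → ℝ) p.2))) := by
  rintro ⟨A, hU, hD, hM, hT⟩
  set v : Fin 3 × Fin 3 → ℝ := fun p => (![1, 3, 10] : Fin 3 → ℝ) p.2 with hv
  have hsum : ∀ t : Fin 3, (A t 0).sum v + (A t 1).sum v
      = (Finset.univ.filter (fun p : Fin 3 × Fin 3 => p.1 ≤ t)).sum v := by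
    intro t
    rw [← Finset.sum_union (hD t), hU t]
  -- round 2 (t = 1)
  have h1 := hT 1 ({(0,0),(0,1),(0,2)} : Finset (Fin 3 × Fin 3)) (by decide)
  have e1 : (Finset.univ.filter (fun p : Fin 3 × Fin 3 => p.1 ≤ 1))
      \ ({(0,0),(0,1),(0,2)} : Finset (Fin 3 × Fin 3))
      = ({(1,0),(1,1),(1,2)} : Finset (Fin 3 × Fin 3)) := by decide
  rw [e1] at h1
  norm_num [hv, Finset.sum_insert, Finset.mem_insert, Finset.mem_singleton, Prod.ext_iff, Fin.ext_iff, Matrix.cons_val_two] at h1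
  have hs1 := hsum 1
  have e2 : (Finset.univ.filter (fun p : Fin 3 × Fin 3 => p.1 ≤ 1))
      = ({(0,0),(0,1),(0,2),(1,0),(1,1),(1,2)} : Finset (Fin 3 × Fin 3)) := by decide
  rw [e2] at hs1
  norm_num [hv, Finset.sum_insert, Finset.mem_insert, Finset.mem_singleton, Prod.ext_iff, Fin.ext_iff, Matrix.cons_val_two] at hs1
  -- round 3 (t = 2)
  have h2 := hT 2 ({(0,2),(1,2),(2,0)} : Finset (Fin 3 × Fin 3)) (by decide)
  have e3 : (Finset.univ.filter (fun p : Fin 3 × Fin 3 => p.1 ≤ 2))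
      \ ({(0,2),(1,2),(2,0)} : Finset (Fin 3 × Fin 3))
      = ({(0,0),(0,1),(1,0),(1,1),(2,1),(2,2)} : Finset (Fin 3 × Fin 3)) := by decide
  rw [e3] at h2
  norm_num [hv, Finset.sum_insert, Finset.mem_insert, Finset.mem_singleton, Prod.ext_iff, Fin.ext_iff, Matrix.cons_val_two] at h2
  have hs2 := hsum 2
  have e4 : (Finset.univ.filter (fun p : Fin 3 × Fin 3 => p.1 ≤ 2))
      = (Finset.univ : Finset (Fin 3 × Fin 3)) := by decide
  rw [e4] at hs2
  norm_num [hv, Fintype.sum_prod_type, Fin.sum_univ_succ] at hs2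
  obtain ⟨h10, h11⟩ := h1
  obtain ⟨h20, h21⟩ := h2
  have eA10 : (A 1 0).sum v = 14 := by linarith
  have eA20 : (A 2 0).sum v = 21 := by linarith
  -- increments
  have hsub : A 1 0 ⊆ A 2 0 := hM 1 2 (by decide) 0
  have hDsum : (A 2 0 \ A 1 0).sum v = 7 := by
    have := Finset.sum_sdiff (f := v) hsub
    linarith
  have hDsub : A 2 0 \ A 1 0 ⊆ ({(2,0),(2,1),(2,2)} : Finset (Fin 3 × Fin 3)) := by
    intro p hp
    simp only [Finset.mem_sdiff] at hp
    obtain ⟨hp2, hp1⟩ := hp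
    have hp1' : p.1 ≠ 0 ∧ p.1 ≠ 1 := by
      constructor <;> intro h
      all_goals {
        have hle : p.1 ≤ 1 := by rw [h]; try decide
        have hmem : p ∈ A 1 0 ∪ A 1 1 := by
          rw [hU 1]; simp [hle]
        rcases Finset.mem_union.mp hmem with h' | h'
        · exact hp1 h'
        · exact (Finset.disjoint_right.mp (hD 2) (hM 1 2 (by decide) 1 h')) hp2 }
    obtain ⟨a, b⟩ := p
    fin_cases a <;> fin_cases b <;> simp_all
  have hmem : A 2 0 \ A 1 0 ∈ ({(2,0),(2,1),(2,2)} : Finset (Fin 3 × Fin 3)).powerset :=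
    Finset.mem_powerset.mpr hDsub
  generalize hDe : A 2 0 \ A 1 0 = D at hDsum hmem
  fin_cases hmem <;> norm_num [hv, Finset.sum_insert, Finset.mem_insert, Finset.mem_singleton, Prod.ext_iff, Fin.ext_iff, Matrix.cons_val_two] at hDsum
end

section
/- There are two agents with identical additive valuations over goods g1, g2, g3 with v(g1)=v(g2)=1, v(g3)=2. If g1 and g2 must both be allocated (to the two agents in some way) strictly before g3 is allocated, then no allocation sequence is TMMS: TMMS after allocating g1, g2 forces each agent to get one of them, but TMMS over all three goods requires the bundles {g1,g2} and {g3}, which is unreachable. -/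
/-- Two agents, identical valuations `v(g₁)=v(g₂)=1`, `v(g₃)=2`; `g₁, g₂` must
both be allocated strictly before `g₃`. No allocation sequence is TMMS at both
the intermediate stage (after `{g₁, g₂}`) and the final stage. -/
theorem stmt6 :
    ¬ ∃ A : Fin 2 → Fin 2 → Finset (Fin 3),
      A 0 0 ∪ A 0 1 = ({0, 1} : Finset (Fin 3)) ∧
      Disjoint (A 0 0) (A 0 1) ∧
      A 1 0 ∪ A 1 1 = ({0, 1, 2} : Finset (Fin 3)) ∧
      Disjoint (A 1 0) (A 1 1) ∧
      (∀ i : Fin 2, A 0 i ⊆ A 1 i) ∧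
      (∀ B ⊆ ({0, 1} : Finset (Fin 3)),
        min (B.sum (![1, 1, 2] : Fin 3 → ℝ))
            ((({0, 1} : Finset (Fin 3)) \ B).sum (![1, 1, 2] : Fin 3 → ℝ))
          ≤ min ((A 0 0).sum (![1, 1, 2] : Fin 3 → ℝ))
                ((A 0 1).sum (![1, 1, 2] : Fin 3 → ℝ))) ∧
      (∀ B ⊆ ({0, 1, 2} : Finset (Fin 3)),
        min (B.sum (![1, 1, 2] : Fin 3 → ℝ))
            ((({0, 1, 2} : Finset (Fin 3)) \ B).sum (![1, 1, 2] : Fin 3 → ℝ))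
          ≤ min ((A 1 0).sum (![1, 1, 2] : Fin 3 → ℝ))
                ((A 1 1).sum (![1, 1, 2] : Fin 3 → ℝ))) := by
  rintro ⟨A, hu0, hd0, hu1, hd1, hsub, h0, h1⟩
  set w : Fin 3 → ℝ := ![1, 1, 2] with hw
  have hwnn : ∀ x : Fin 3, (0:ℝ) ≤ w x := by
    intro x; fin_cases x <;> norm_num [hw]
  -- intermediate: each s0i ≥ 1
  have key0 := h0 {0} (by decide)
  have hs01 : ({0,1} : Finset (Fin 3)) \ {0} = {1} := by decide
  rw [hs01] at key0
  simp only [Finset.sum_singleton] at key0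
  have hw0 : w 0 = 1 := by norm_num [hw]
  have hw1 : w 1 = 1 := by norm_num [hw]
  have hw2 : w 2 = 2 := by norm_num [hw]; rfl
  norm_num [hw0, hw1] at key0
  have h00 : (1:ℝ) ≤ (A 0 0).sum w := key0.1
  have h01 : (1:ℝ) ≤ (A 0 1).sum w := key0.2
  -- final: each s1i ≥ 2, and total = 4
  have key1 := h1 {2} (by decide)
  have hs12 : ({0,1,2} : Finset (Fin 3)) \ {2} = {0,1} := by decide
  rw [hs12] at key1
  have hsum01 : ({0,1} : Finset (Fin 3)).sum w = 2 := by
    rw [Finset.sum_pair (by decide)]; norm_num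
  rw [Finset.sum_singleton, hsum01] at key1
  norm_num [show (![1, 1, 2] : Fin 3 → ℝ) 2 = 2 from hw2] at key1
  have h10 : (2:ℝ) ≤ (A 1 0).sum w := key1.1
  have h11 : (2:ℝ) ≤ (A 1 1).sum w := key1.2
  have htot : (A 1 0).sum w + (A 1 1).sum w = 4 := by
    rw [← Finset.sum_union hd1, hu1]
    have : ({0,1,2} : Finset (Fin 3)).sum w = w 0 + w 1 + w 2 := by
      rw [show ({0,1,2} : Finset (Fin 3)) = insert 0 (insert 1 {2}) from rfl]
      rw [Finset.sum_insert (by decide), Finset.sum_insert (by decide), Finset.sum_singleton]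
      ring
    rw [this, hw0, hw1, hw2]; norm_num
  have h10' : (A 1 0).sum w ≤ 2 := by linarith
  have h11' : (A 1 1).sum w ≤ 2 := by linarith
  -- A 0 i ⊆ {0,1}, so 2 ∉ A 0 i
  have hA0sub : ∀ i : Fin 2, A 0 i ⊆ ({0,1} : Finset (Fin 3)) := by
    intro i
    fin_cases i
    · exact hu0 ▸ Finset.subset_union_left
    · exact hu0 ▸ Finset.subset_union_right
  have h2notin : ∀ i : Fin 2, (2 : Fin 3) ∉ A 0 i := by
    intro i h
    have := hA0sub i h
    revert this; decide
  -- 2 is in A 1 0 or A 1 1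
  have h2mem : (2 : Fin 3) ∈ A 1 0 ∪ A 1 1 := by rw [hu1]; decide
  have key : ∀ i : Fin 2, (2 : Fin 3) ∈ A 1 i → False := by
    intro i h2
    have hsubi : insert (2 : Fin 3) (A 0 i) ⊆ A 1 i :=
      Finset.insert_subset h2 (hsub i)
    have hle : (insert (2 : Fin 3) (A 0 i)).sum w ≤ (A 1 i).sum w :=
      Finset.sum_le_sum_of_subset_of_nonneg hsubi (fun x _ _ => hwnn x)
    rw [Finset.sum_insert (h2notin i)] at hle
    norm_num at hle
    have hi1 : (1:ℝ) ≤ (A 0 i).sum w := by fin_cases i <;> assumption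
    have hi2 : (A 1 i).sum w ≤ 2 := by fin_cases i <;> assumption
    linarith
  rcases Finset.mem_union.mp h2mem with h | h
  · exact key 0 h
  · exact key 1 h
end

section
/- For two agents with bi-valued additive valuations taking values in {a, b} with 0 < a <= b, and identical goods arriving over rounds: if an allocation is EF1 via round-robin structure where at each point |A_i| and |A_j| differ by at most one and the next pick goes to the agent with fewer goods, then for all agents i,j and every prefix, v_i(A_i) >= (a/b) · v_i(A_j \ {g}) for every g ∈ A_j. Moreover the ratio a/b is tight: with goods valued (a, a, b) arriving as O_1={a,a}, O_2={b} and identical valuations, no allocation sequence achieves a ratio better than a/b. -/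
/-!
With values in `[a, b]`, removing one good from a bundle that has at most one good more than
one's own leaves at most as many goods, each worth at most `b`, against own goods worth at least
`a` each; this gives the ratio `a / b`.

For tightness, at the first round each agent must hold one of the two `a`-goods (an empty bundle
envies a bundle of two positive goods, even after a removal). At the second round the agent who
receives the `b`-good still has `b` after removing its `a`-good, while the other agent has only
`a`, so no ratio above `a / b` survives.
-/

open Finset

variable {G : Type*}

lemma div_mul_sum_le_sum_of_card_le {a b : ℝ} {v : G → ℝ} {S T : Finset G}
    (ha : 0 ≤ a) (hb : 0 < b) (hS : ∀ x ∈ S, v x ≤ b) (hT : ∀ x ∈ T, a ≤ v x)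
    (hcard : S.card ≤ T.card) : a / b * S.sum v ≤ T.sum v :=
  calc a / b * S.sum v ≤ a / b * (S.card • b) :=
        mul_le_mul_of_nonneg_left (sum_le_card_nsmul S v b hS) (by positivity)
    _ = S.card • a := by rw [nsmul_eq_mul, nsmul_eq_mul]; field_simp
    _ ≤ T.card • a := nsmul_le_nsmul_left ha hcard
    _ ≤ T.sum v := card_nsmul_le_sum T v a hT

variable [DecidableEq G]

def IsEFXTowards (α : ℝ) (v : G → ℝ) (P Q : Finset G) : Prop :=
  ∀ g ∈ Q, α * (Q.erase g).sum v ≤ P.sum v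

lemma isEFXTowards_div_of_card_le_succ {a b : ℝ} {v : G → ℝ} {P Q : Finset G}
    (ha : 0 ≤ a) (hb : 0 < b) (hP : ∀ x ∈ P, a ≤ v x) (hQ : ∀ x ∈ Q, v x ≤ b)
    (hcard : Q.card ≤ P.card + 1) : IsEFXTowards (a / b) v P Q := by
  intro g hg
  refine div_mul_sum_le_sum_of_card_le ha hb (fun x hx => hQ x (mem_of_mem_erase hx)) hP ?_
  rw [card_erase_of_mem hg]
  omega

lemma nonempty_of_isEFXTowards {α : ℝ} {v : G → ℝ} {P Q s : Finset G} (hα : 0 < α)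
    (hv : ∀ x ∈ s, 0 < v x) (hs : 1 < s.card) (hPQ : P ∪ Q = s)
    (h : IsEFXTowards α v P Q) : P.Nonempty := by
  rw [nonempty_iff_ne_empty]
  rintro rfl
  rw [empty_union] at hPQ
  subst hPQ
  obtain ⟨g, hg⟩ := card_pos.mp (zero_lt_one.trans hs)
  have herase : (Q.erase g).Nonempty := by
    rw [← card_pos, card_erase_of_mem hg]
    omega
  have hpos : 0 < (Q.erase g).sum v :=
    sum_pos (fun x hx => hv x (mem_of_mem_erase hx)) herase
  have := h g hg
  rw [sum_empty] at this
  nlinarith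

/-- `Q₀` and `Q` are the bundles, after the first and the second round of the tightness instance,
of the agent who receives good `2`. -/
lemma not_isEFXTowards_of_mem_two {a b α : ℝ} {Q₀ P Q : Finset (Fin 3)}
    (ha : 0 ≤ a) (hb : 0 ≤ b) (hα : 0 ≤ α) (hab : a < α * b)
    (hQ₀ : Q₀ ⊆ {0, 1}) (hQ₀ne : Q₀.Nonempty) (hQ₀Q : Q₀ ⊆ Q) (h2 : 2 ∈ Q)
    (hPQ : P ∪ Q = {0, 1, 2}) (hdisj : Disjoint P Q) :
    ¬ IsEFXTowards α ![a, a, b] P Q := by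
  intro h
  obtain ⟨x, hx⟩ := hQ₀ne
  have hx2 : x ≠ 2 := by
    have := hQ₀ hx
    simp only [mem_insert, mem_singleton] at this
    rcases this with rfl | rfl <;> decide
  have hQcard : 2 ≤ Q.card := by
    rw [← card_pair hx2]
    exact card_le_card (insert_subset (hQ₀Q hx) (singleton_subset_iff.mpr h2))
  have hPcard : P.card ≤ 1 := by
    have := card_union_of_disjoint hdisj
    rw [hPQ] at this
    simp only [mem_insert, mem_singleton, Fin.reduceEq, or_self, not_false_eq_true,
      card_insert_of_notMem, card_singleton] at this
    omega
  have hP : P.sum ![a, a, b] ≤ a :=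
    calc P.sum ![a, a, b] ≤ P.card • a := by
          refine sum_le_card_nsmul P _ a fun y hy => ?_
          have hy2 : y ≠ 2 := fun hy2 => disjoint_left.mp hdisj hy (hy2 ▸ h2)
          fin_cases y <;> simp_all
      _ ≤ 1 • a := nsmul_le_nsmul_left ha hPcard
      _ = a := one_nsmul a
  have hQ : b ≤ (Q.erase x).sum ![a, a, b] := by
    have hnonneg : ∀ y ∈ Q.erase x, 0 ≤ (![a, a, b] : Fin 3 → ℝ) y := by
      intro y _
      fin_cases y <;> simpa
    simpa using single_le_sum hnonneg (mem_erase.mpr ⟨hx2.symm, h2⟩)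
  have := h x (hQ₀Q hx)
  nlinarith [mul_le_mul_of_nonneg_left hQ hα]

/-- For bi-valued goods (values in `{a, b}`, `0 < a ≤ b`): (1) under the
round-robin card structure (`|A_j| ≤ |A_i| + 1`), the allocation is
`a/b`-EFX for agent `i` against `j`; (2) the ratio `a/b` is tight: with
goods valued `(a, a, b)` arriving as `O₁ = {g₁, g₂}`, `O₂ = {g₃}` and two
agents with identical valuations, no allocation sequence is `α`-TEFX for any
`α > a/b`. -/
theorem stmt7 (a b : ℝ) (ha : 0 < a) (hab : a ≤ b) :
    (∀ (G : Type) (_ : DecidableEq G) (v : G → ℝ),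
      (∀ g, v g = a ∨ v g = b) →
      ∀ Ai Aj : Finset G, Aj.card ≤ Ai.card + 1 →
        ∀ g ∈ Aj, (a / b) * ((Aj.erase g).sum v) ≤ Ai.sum v) ∧
    (∀ α : ℝ, a / b < α →
      ¬ ∃ A : Fin 2 → Fin 2 → Finset (Fin 3),
        A 0 0 ∪ A 0 1 = ({0, 1} : Finset (Fin 3)) ∧
        Disjoint (A 0 0) (A 0 1) ∧
        A 1 0 ∪ A 1 1 = ({0, 1, 2} : Finset (Fin 3)) ∧
        Disjoint (A 1 0) (A 1 1) ∧
        (∀ i : Fin 2, A 0 i ⊆ A 1 i) ∧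
        (∀ t i j : Fin 2, ∀ g ∈ A t j,
          α * ((A t j).erase g).sum (![a, a, b] : Fin 3 → ℝ)
            ≤ (A t i).sum (![a, a, b] : Fin 3 → ℝ))) := by
  have hb : 0 < b := ha.trans_le hab
  refine ⟨fun G _ v hv Ai Aj hcard => isEFXTowards_div_of_card_le_succ ha.le hb
    (fun x _ => (hv x).elim ge_of_eq (fun h => h ▸ hab))
    (fun x _ => (hv x).elim (fun h => h ▸ hab) le_of_eq) hcard, ?_⟩
  rintro α hα ⟨A, h01, -, h11, hd1, hsub, htefx⟩
  have hα0 : 0 < α := (div_pos ha hb).trans hα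
  have habα : a < α * b := (div_lt_iff₀ hb).mp hα
  have hpos : ∀ x ∈ ({0, 1} : Finset (Fin 3)), 0 < (![a, a, b] : Fin 3 → ℝ) x := by
    intro x hx
    fin_cases x <;> simp_all
  have hne₀ := nonempty_of_isEFXTowards hα0 hpos (by decide) h01 (htefx 0 0 1)
  have hne₁ := nonempty_of_isEFXTowards hα0 hpos (by decide) ((union_comm _ _).trans h01)
    (htefx 0 1 0)
  have h2 : (2 : Fin 3) ∈ A 1 0 ∪ A 1 1 := by rw [h11]; decide
  rcases mem_union.mp h2 with h2 | h2
  · exact not_isEFXTowards_of_mem_two ha.le hb.le hα0.le habα (h01 ▸ subset_union_left) hne₀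
      (hsub 0) h2 ((union_comm _ _).trans h11) hd1.symm (htefx 1 1 0)
  · exact not_isEFXTowards_of_mem_two ha.le hb.le hα0.le habα (h01 ▸ subset_union_right) hne₁
      (hsub 1) h2 h11 hd1 (htefx 1 0 1)
end

section
/- In a bipartite graph where each vertex represents a good, if some agent's two allocated goods are identical copies of each other then those two vertices form an isolated edge; otherwise every vertex has exactly two neighbors (its bundle-partner and its identical copy), and these neighbors are distinct and non-adjacent. Consequently a proper 2-coloring exists, yielding a selection of exactly one good from each agent's 2-good bundle such that the selected goods form exactly one copy of each good type. -/
/-!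
Let `p` send each good to its bundle-partner and `c` to its identical copy; both are
fixed-point-free involutions. A proper 2-coloring of the goods graph is a map `f : V → Bool`
with `f ∘ p = !f` and `f ∘ c = !f`. Such an `f` must be constant on the orbits of the rotation
`σ = c ∘ p`, and `p` permutes these orbits. No orbit of `σ` contains both `a` and `p a`, since
`σ^k a = p a` makes `p` fix `σ^j a` (if `k = 2j`) or `c` fix `p (σ^j a)` (if `k = 2j + 1`).
So `p` induces a fixed-point-free involution on the orbits, and coloring one orbit of each
swapped pair `true` gives `f`. Restricted to a bundle `{a, p a}`, the goods colored `true`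
are exactly one of the two.
-/

open Equiv Equiv.Perm Finset

namespace Function.Involutive

variable {α : Type*} {p c : α → α}

open scoped Classical in
theorem exists_bool_apply_eq_not (hp : Involutive p) (hfix : ∀ a, p a ≠ a) :
    ∃ f : α → Bool, ∀ a, f (p a) = !f a := by
  refine ⟨fun a => decide (WellOrderingRel a (p a)), fun a => ?_⟩
  simp only [hp a]
  rcases trichotomous_of WellOrderingRel a (p a) with h | h | h
  · simp [h, asymm h]
  · exact absurd h.symm (hfix a)
  · simp [h, asymm h]

def rotation (hp : Involutive p) (hc : Involutive c) : Perm α :=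
  hc.toPerm c * hp.toPerm p

section Rotation

variable (hp : Involutive p) (hc : Involutive c)

theorem rotation_apply (a : α) : rotation hp hc a = c (p a) := rfl

theorem conj_rotation :
    hp.toPerm p * rotation hp hc * (hp.toPerm p)⁻¹ = (rotation hp hc)⁻¹ := by
  rw [eq_inv_iff_mul_eq_one]
  ext a
  simp [rotation, Perm.inv_def, toPerm_symm, hp a, hc (p a), hp (c (p a))]

theorem apply_rotation_zpow_apply (k : ℤ) (a : α) :
    p ((rotation hp hc ^ k) a) = (rotation hp hc ^ (-k)) (p a) := by
  have := congrArg (fun σ : Perm α => σ ^ k) (conj_rotation hp hc)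
  simp only [conj_zpow, inv_zpow'] at this
  have := congrArg (fun σ : Perm α => σ (p a)) this
  simpa [Perm.mul_apply, Perm.inv_def, toPerm_symm, hp a] using this

theorem sameCycle_apply_apply {a b : α} (h : SameCycle (rotation hp hc) a b) :
    SameCycle (rotation hp hc) (p a) (p b) := by
  obtain ⟨k, rfl⟩ := h
  exact ⟨-k, (apply_rotation_zpow_apply hp hc k a).symm⟩

theorem not_sameCycle_apply (hpfix : ∀ a, p a ≠ a) (hcfix : ∀ a, c a ≠ a) (a : α) :
    ¬ SameCycle (rotation hp hc) a (p a) := by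
  rintro ⟨k, hk⟩
  obtain ⟨j, rfl | rfl⟩ := Int.even_or_odd' k
  · apply hpfix ((rotation hp hc ^ j) a)
    rw [apply_rotation_zpow_apply hp hc, ← hk, ← Perm.mul_apply, ← zpow_add]
    congr 2; ring
  · have hpj : p ((rotation hp hc ^ j) a) = (rotation hp hc ^ (j + 1)) a := by
      rw [apply_rotation_zpow_apply hp hc, ← hk, ← Perm.mul_apply, ← zpow_add]
      congr 2; ring
    apply hcfix (p ((rotation hp hc ^ j) a))
    rw [← rotation_apply hp hc, hpj, ← Perm.mul_apply, ← zpow_one_add, add_comm]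

end Rotation

theorem exists_bool_apply_eq_not_and_apply_eq_not (hp : Involutive p) (hc : Involutive c)
    (hpfix : ∀ a, p a ≠ a) (hcfix : ∀ a, c a ≠ a) :
    ∃ f : α → Bool, (∀ a, f (p a) = !f a) ∧ ∀ a, f (c a) = !f a := by
  let s := SameCycle.setoid (rotation hp hc)
  let q : Quotient s → Quotient s := Quotient.map p fun _ _ => sameCycle_apply_apply hp hc
  have hq : Involutive q := Quotient.ind fun a => congrArg Quotient.mk'' (hp a)
  have hqfix : ∀ x, q x ≠ x := Quotient.ind fun a h =>
    not_sameCycle_apply hp hc hpfix hcfix a (Quotient.exact h).symm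
  obtain ⟨f, hf⟩ := hq.exists_bool_apply_eq_not hqfix
  refine ⟨fun a => f ⟦a⟧, fun a => hf ⟦a⟧, fun a => ?_⟩
  have : (⟦c a⟧ : Quotient s) = q ⟦a⟧ := by
    refine Quotient.sound (SameCycle.symm ⟨1, ?_⟩)
    rw [zpow_one, rotation_apply, hp a]
  exact (congrArg f this).trans (hf ⟦a⟧)

end Function.Involutive

section Bundles

variable {V ι : Type*} [Fintype V] [DecidableEq V] {bundle : V → ι}

theorem exists_bundle_partner [DecidableEq ι]
    (hbundle : ∀ i, (univ.filter fun g => bundle g = i).card = 2) :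
    ∃ p : V → V, Function.Involutive p ∧ (∀ g, p g ≠ g) ∧
      ∀ g x, bundle x = bundle g ↔ x = g ∨ x = p g := by
  have hfiber : ∀ g, ∃ q, (univ.filter fun x => bundle x = bundle g).erase g = {q} := fun g =>
    card_eq_one.1 <| by rw [card_erase_of_mem (by simp), hbundle]
  choose p hp using hfiber
  have hpart : ∀ g x, bundle x = bundle g ↔ x = g ∨ x = p g := fun g x => by
    have := congrArg (x ∈ ·) (hp g)
    simp only [mem_erase, mem_filter, mem_univ, true_and, mem_singleton, eq_iff_iff] at this
    tauto
  have hpfix : ∀ g, p g ≠ g := fun g h => by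
    simpa [h] using congrArg (g ∈ ·) (hp g)
  refine ⟨p, fun g => ?_, hpfix, hpart⟩
  have hbp : ∀ g, bundle (p g) = bundle g := fun g => (hpart g (p g)).2 (Or.inr rfl)
  exact ((hpart g _).1 ((hbp _).trans (hbp g))).resolve_right (hpfix (p g))

theorem neighborFinset_eq_pair {p copy : V → V} {H : SimpleGraph V} [DecidableRel H.Adj]
    (hAdj : ∀ g₁ g₂, H.Adj g₁ g₂ ↔
      g₁ ≠ g₂ ∧ (bundle g₁ = bundle g₂ ∨ copy g₁ = g₂))
    (hpart : ∀ g x, bundle x = bundle g ↔ x = g ∨ x = p g) (hpfix : ∀ g, p g ≠ g)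
    (hcopy : ∀ g, copy g ≠ g) (g : V) :
    H.neighborFinset g = {p g, copy g} := by
  ext x
  simp only [SimpleGraph.mem_neighborFinset, hAdj, mem_insert, mem_singleton,
    eq_comm (a := bundle g), hpart, eq_comm (a := copy g)]
  constructor
  · rintro ⟨hne, (h | h) | h⟩
    · exact absurd h.symm hne
    · exact Or.inl h
    · exact Or.inr h
  · rintro (rfl | rfl)
    · exact ⟨(hpfix g).symm, Or.inl (Or.inr rfl)⟩
    · exact ⟨(hcopy g).symm, Or.inr rfl⟩

theorem card_filter_bundle_eq_one [DecidableEq ι] {p : V → V} {f : V → Bool}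
    (hpart : ∀ g x, bundle x = bundle g ↔ x = g ∨ x = p g) (hf : ∀ g, f (p g) = !f g)
    {i : ι} (hi : ∃ g, bundle g = i) :
    ((univ.filter fun g => f g).filter fun g => bundle g = i).card = 1 := by
  obtain ⟨g, rfl⟩ := hi
  rw [card_eq_one]
  refine ⟨if f g then g else p g, ?_⟩
  ext x
  simp only [mem_filter, mem_univ, true_and, hpart, mem_singleton]
  constructor
  · rintro ⟨hx, rfl | rfl⟩
    · simp [hx]
    · cases hfg : f g <;> simp_all
  · split_ifs with hfg
    · rintro rfl; exact ⟨hfg, Or.inl rfl⟩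
    · rintro rfl; exact ⟨by simp [hf, hfg], Or.inr rfl⟩

end Bundles

theorem stmt14_general {V : Type*} [Fintype V] [DecidableEq V] (n : ℕ)
    (bundle : V → Fin n) (copy : V → V)
    (hbundle : ∀ i : Fin n, (Finset.univ.filter (fun g => bundle g = i)).card = 2)
    (hinv : Function.Involutive copy) (hnofix : ∀ g, copy g ≠ g)
    (H : SimpleGraph V) [DecidableRel H.Adj]
    (hAdj : ∀ g₁ g₂, H.Adj g₁ g₂ ↔
      g₁ ≠ g₂ ∧ (bundle g₁ = bundle g₂ ∨ copy g₁ = g₂)) :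
    (∀ g, bundle (copy g) = bundle g → H.neighborFinset g = {copy g}) ∧
    (∀ g, bundle (copy g) ≠ bundle g → (H.neighborFinset g).card = 2) ∧
    ∃ S : Finset V,
      (∀ i : Fin n, (S.filter (fun g => bundle g = i)).card = 1) ∧
      (∀ g, g ∈ S ↔ copy g ∉ S) := by
  obtain ⟨p, hp, hpfix, hpart⟩ := exists_bundle_partner hbundle
  have hN := neighborFinset_eq_pair hAdj hpart hpfix hnofix
  obtain ⟨f, hfp, hfc⟩ := hp.exists_bool_apply_eq_not_and_apply_eq_not hinv hpfix hnofix
  refine ⟨fun g hg => ?_, fun g hg => ?_, univ.filter fun g => f g, fun i => ?_, fun g => ?_⟩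
  · have hcp : copy g = p g := ((hpart g _).1 hg).resolve_left (hnofix g)
    rw [hN, hcp, pair_eq_singleton]
  · have hne : p g ≠ copy g := fun h => hg (h ▸ (hpart g (p g)).2 (Or.inr rfl))
    rw [hN, card_pair hne]
  · refine card_filter_bundle_eq_one hpart hfp ?_
    obtain ⟨g, hg⟩ : (univ.filter fun g => bundle g = i).Nonempty :=
      card_pos.1 (by rw [hbundle i]; omega)
    exact ⟨g, (mem_filter.1 hg).2⟩
  · simp [hfc]

/-- In the bipartite goods graph: if an agent's two goods are identical copies
of each other they form an isolated edge; otherwise every vertex has exactly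
two neighbors (bundle-partner and identical copy). Consequently there is a
selection of exactly one good per agent containing exactly one copy of each
good type. -/
theorem stmt14 {V : Type*} [Fintype V] [DecidableEq V] (n : ℕ)
    (bundle : V → Fin n) (copy : V → V)
    (hcard : Fintype.card V = 2 * n)
    (hbundle : ∀ i : Fin n, (Finset.univ.filter (fun g => bundle g = i)).card = 2)
    (hinv : Function.Involutive copy) (hnofix : ∀ g, copy g ≠ g)
    (H : SimpleGraph V) [DecidableRel H.Adj]
    (hAdj : ∀ g₁ g₂, H.Adj g₁ g₂ ↔
      g₁ ≠ g₂ ∧ (bundle g₁ = bundle g₂ ∨ copy g₁ = g₂)) :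
    (∀ g, bundle (copy g) = bundle g → H.neighborFinset g = {copy g}) ∧
    (∀ g, bundle (copy g) ≠ bundle g → (H.neighborFinset g).card = 2) ∧
    ∃ S : Finset V,
      (∀ i : Fin n, (S.filter (fun g => bundle g = i)).card = 1) ∧
      (∀ g, g ∈ S ↔ copy g ∉ S) :=
  stmt14_general n bundle copy hbundle hinv hnofix H hAdj
end

section
/- For two agents with generalized binary additive valuations (every value in {0, b} for fixed b > 0), the following allocation is TEFX: goods valued b by both agents are allocated alternately (round-robin); goods valued b by exactly one agent go to that agent; goods valued 0 by both go to the agent who is later (or never) first-allocated a good valued b only by themselves. At every round t and for both agents i ≠ j: v_i(A^t_i) >= v_i(A^t_j \ {g}) for all g ∈ A^t_j. -/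
/-!
Order the goods compatibly with their arrival and hand the goods valued by both agents out
alternately, starting with agent `p`; every other good valued by some agent goes to that agent, and
the goods valued by nobody go to the other agent `q`. At every round the common goods are then
split evenly up to one in `p`'s favour, so `p` is envy-free, and `q` is envious of at most one
common good. Removing a common good from `p`'s bundle cures that; removing a good exclusive to `p`
does not change `q`'s valuation, but if `q` is chosen as the agent whose exclusive goods start
arriving first, `q` already owns an exclusive good that compensates for the extra common one.
-/

open Finset

section Rank

variable {α : Type*} [LinearOrder α]

def rankIn (s : Finset α) (x : α) : ℕ := #{y ∈ s | y < x}

theorem card_filter_even_rankIn (s : Finset α) :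
    #{x ∈ s | Even (rankIn s x)} = (#s + 1) / 2 := by
  induction s using Finset.induction_on_max with
  | empty => simp
  | insert a s ha ih =>
    have has : a ∉ s := fun h => lt_irrefl a (ha a h)
    have hrank : ∀ x ∈ s, rankIn (insert a s) x = rankIn s x := fun x hx => by
      rw [rankIn, filter_insert, if_neg (not_lt.2 (ha x hx).le), rankIn]
    have hrank_max : rankIn (insert a s) a = #s := by
      rw [rankIn, filter_insert, if_neg (lt_irrefl a), filter_true_of_mem ha]
    rw [filter_insert, hrank_max, filter_congr fun x hx => by rw [hrank x hx],
      card_insert_of_notMem has]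
    split_ifs with heven <;> rw [Nat.even_iff] at heven
    · rw [card_insert_of_notMem fun h => has (mem_filter.1 h).1, ih]
      omega
    · rw [ih]
      omega

theorem rankIn_inter_of_isLowerSet (s : Finset α) {X : Finset α} (hX : IsLowerSet (X : Set α))
    {x : α} (hx : x ∈ X) : rankIn (s ∩ X) x = rankIn s x := by
  unfold rankIn
  congr 1
  ext y
  simp only [mem_filter, mem_inter]
  exact ⟨fun h => ⟨h.1.1, h.2⟩, fun h => ⟨⟨h.1, hX h.2.le hx⟩, h.2⟩⟩

theorem card_filter_even_rankIn_inter (s : Finset α) {X : Finset α}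
    (hX : IsLowerSet (X : Set α)) :
    #{x ∈ s ∩ X | Even (rankIn s x)} = (#(s ∩ X) + 1) / 2 := by
  rw [← card_filter_even_rankIn, filter_congr fun x hx => by
    rw [← rankIn_inter_of_isLowerSet s hX (mem_inter.1 hx).2]]

theorem card_filter_odd_rankIn_inter (s : Finset α) {X : Finset α}
    (hX : IsLowerSet (X : Set α)) :
    #{x ∈ s ∩ X | ¬Even (rankIn s x)} = #(s ∩ X) / 2 := by
  have := card_filter_add_card_filter_not (s := s ∩ X) (fun x => Even (rankIn s x))
  rw [card_filter_even_rankIn_inter s hX] at this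
  omega

end Rank

theorem exists_linearOrder_monotone {G τ : Type*} [LinearOrder τ] (f : G → τ) :
    ∃ _ : LinearOrder G, Monotone f :=
  ⟨LinearOrder.lift' (fun g => toLex (f g, embeddingToCardinal g))
      fun _ _ h => embeddingToCardinal.injective (congrArg Prod.snd (toLex.injective h)),
    fun _ _ h => Prod.Lex.monotone_fst _ _ h⟩

theorem arrival_imp_arrival_or_converse {G τ : Type*} [LinearOrder τ] (round : G → τ)
    (P Q : G → Prop) :
    (∀ t g, P g → round g ≤ t → ∃ g', Q g' ∧ round g' ≤ t) ∨
      (∀ t g, Q g → round g ≤ t → ∃ g', P g' ∧ round g' ≤ t) := by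
  by_contra! ⟨⟨t, g, hPg, hgt, hQ⟩, ⟨t', g', hQg', hg't', hP⟩⟩
  exact lt_irrefl _ (((hP g hPg).trans_le hgt).trans ((hQ g' hQg').trans_le hg't'))

section Binary

variable {G : Type*} {b : ℝ} {w : G → ℝ}

theorem sum_eq_mul_card_filter_ne_zero (hw : ∀ g, w g = 0 ∨ w g = b) (s : Finset G) :
    s.sum w = b * #{x ∈ s | w x ≠ 0} := by
  rw [← sum_filter_ne_zero,
    sum_congr rfl fun x hx => (hw x).resolve_left (mem_filter.1 hx).2, sum_const, nsmul_eq_mul,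
    mul_comm]

theorem sum_le_sum_of_card_filter_ne_zero_le (hb : 0 ≤ b) (hw : ∀ g, w g = 0 ∨ w g = b)
    {s t : Finset G} (h : #{x ∈ s | w x ≠ 0} ≤ #{x ∈ t | w x ≠ 0}) :
    s.sum w ≤ t.sum w := by
  rw [sum_eq_mul_card_filter_ne_zero hw, sum_eq_mul_card_filter_ne_zero hw]
  gcongr

end Binary

section Allocation

variable {G : Type*} [LinearOrder G] [Fintype G] (v : Fin 2 → G → ℝ) (p q : Fin 2)

noncomputable def commonGoods : Finset G := {g | v p g ≠ 0 ∧ v q g ≠ 0}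

/-- Processing the goods in the order of `G`, taking the common goods of even rank is round-robin
starting with `p`. -/
noncomputable def owner (g : G) : Fin 2 :=
  if v p g ≠ 0 ∧ (v q g = 0 ∨ Even (rankIn (commonGoods v p q) g)) then p else q

variable {v p q}

theorem owner_eq_left_iff (hpq : p ≠ q) {g : G} :
    owner v p q g = p ↔
      v p g ≠ 0 ∧ (v q g = 0 ∨ Even (rankIn (commonGoods v p q) g)) := by
  unfold owner
  split_ifs with h <;> simp [h, hpq.symm]

theorem owner_eq_right_iff (hpq : p ≠ q) {g : G} :
    owner v p q g = q ↔
      ¬(v p g ≠ 0 ∧ (v q g = 0 ∨ Even (rankIn (commonGoods v p q) g))) := by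
  unfold owner
  split_ifs with h <;> simp [h, hpq]

variable {b : ℝ} {X : Finset G}

theorem sum_filter_owner_eq_right_le_left (hpq : p ≠ q) (hb : 0 ≤ b)
    (hv : ∀ i g, v i g = 0 ∨ v i g = b) (hX : IsLowerSet (X : Set G)) :
    {x ∈ X | owner v p q x = q}.sum (v p) ≤ {x ∈ X | owner v p q x = p}.sum (v p) := by
  set C := commonGoods v p q
  apply sum_le_sum_of_card_filter_ne_zero_le hb (hv p)
  calc #{x ∈ {x ∈ X | owner v p q x = q} | v p x ≠ 0}
      ≤ #{x ∈ C ∩ X | ¬Even (rankIn C x)} := card_le_card fun x => by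
        simp only [mem_filter, mem_inter, owner_eq_right_iff hpq, C, commonGoods, mem_univ,
          true_and]
        tauto
    _ ≤ #{x ∈ C ∩ X | Even (rankIn C x)} := by
        rw [card_filter_odd_rankIn_inter C hX, card_filter_even_rankIn_inter C hX]
        omega
    _ ≤ #{x ∈ {x ∈ X | owner v p q x = p} | v p x ≠ 0} := card_le_card fun x => by
        simp only [mem_filter, mem_inter, owner_eq_left_iff hpq, C, commonGoods, mem_univ,
          true_and]
        tauto

theorem sum_erase_filter_owner_eq_left_le_right (hpq : p ≠ q) (hb : 0 ≤ b)
    (hv : ∀ i g, v i g = 0 ∨ v i g = b) (hX : IsLowerSet (X : Set G))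
    (hfirst : ∀ g ∈ X, v p g ≠ 0 → v q g = 0 → ∃ g' ∈ X, v q g' ≠ 0 ∧ v p g' = 0)
    {g : G} (hg : g ∈ {x ∈ X | owner v p q x = p}) :
    ({x ∈ X | owner v p q x = p}.erase g).sum (v q) ≤
      {x ∈ X | owner v p q x = q}.sum (v q) := by
  set C := commonGoods v p q
  obtain ⟨hgX, hgp, hgq⟩ : g ∈ X ∧ v p g ≠ 0 ∧ (v q g = 0 ∨ Even (rankIn C g)) := by
    rwa [mem_filter, owner_eq_left_iff hpq] at hg
  have hleft : {x ∈ {x ∈ X | owner v p q x = p} | v q x ≠ 0} ⊆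
      {x ∈ C ∩ X | Even (rankIn C x)} := fun x => by
    simp only [mem_filter, mem_inter, owner_eq_left_iff hpq, C, commonGoods, mem_univ, true_and]
    tauto
  have hright : {x ∈ C ∩ X | ¬Even (rankIn C x)} ⊆
      {x ∈ {x ∈ X | owner v p q x = q} | v q x ≠ 0} := fun x => by
    simp only [mem_filter, mem_inter, owner_eq_right_iff hpq, C, commonGoods, mem_univ, true_and]
    tauto
  have hbalance :
      #{x ∈ C ∩ X | Even (rankIn C x)} ≤ #{x ∈ C ∩ X | ¬Even (rankIn C x)} + 1 := by
    rw [card_filter_odd_rankIn_inter C hX, card_filter_even_rankIn_inter C hX]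
    omega
  apply sum_le_sum_of_card_filter_ne_zero_le hb (hv q)
  rw [filter_erase]
  by_cases hgq' : v q g = 0
  -- `g` is exclusive to `p`, so `q` already owns a good exclusive to `q`.
  · obtain ⟨g', hg'X, hg'q, hg'p⟩ := hfirst g hgX hgp hgq'
    have hg' : g' ∉ {x ∈ C ∩ X | ¬Even (rankIn C x)} := by
      simp [C, commonGoods, hg'p]
    calc _ ≤ #{x ∈ {x ∈ X | owner v p q x = p} | v q x ≠ 0} := card_erase_le
      _ ≤ #{x ∈ C ∩ X | Even (rankIn C x)} := card_le_card hleft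
      _ ≤ #(insert g' {x ∈ C ∩ X | ¬Even (rankIn C x)}) := by
          rw [card_insert_of_notMem hg']
          exact hbalance
      _ ≤ _ := card_le_card <| insert_subset (by
          simp only [mem_filter, owner_eq_right_iff hpq]
          tauto) hright
  · have hgC : g ∈ {x ∈ C ∩ X | Even (rankIn C x)} := by
      simp only [mem_filter, mem_inter, C, commonGoods, mem_univ, true_and]
      tauto
    calc _ ≤ #({x ∈ C ∩ X | Even (rankIn C x)}.erase g) :=
          card_le_card (erase_subset_erase _ hleft)
      _ = #{x ∈ C ∩ X | Even (rankIn C x)} - 1 := card_erase_of_mem hgC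
      _ ≤ #{x ∈ C ∩ X | ¬Even (rankIn C x)} := by omega
      _ ≤ _ := card_le_card hright

theorem sum_erase_filter_owner_le (hpq : p ≠ q) (hb : 0 ≤ b)
    (hv : ∀ i g, v i g = 0 ∨ v i g = b) (hX : IsLowerSet (X : Set G))
    (hfirst : ∀ g ∈ X, v p g ≠ 0 → v q g = 0 → ∃ g' ∈ X, v q g' ≠ 0 ∧ v p g' = 0)
    (i j : Fin 2) {g : G} (hg : g ∈ {x ∈ X | owner v p q x = j}) :
    ({x ∈ X | owner v p q x = j}.erase g).sum (v i) ≤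
      {x ∈ X | owner v p q x = i}.sum (v i) := by
  have herase : ∀ s : Finset G, (s.erase g).sum (v i) ≤ s.sum (v i) := fun s =>
    sum_le_sum_of_card_filter_ne_zero_le hb (hv i)
      (card_le_card (filter_subset_filter _ (erase_subset g s)))
  obtain rfl | hij := eq_or_ne i j
  · exact herase _
  obtain ⟨rfl, rfl⟩ | ⟨rfl, rfl⟩ : (i = p ∧ j = q) ∨ (i = q ∧ j = p) := by omega
  · exact (herase _).trans (sum_filter_owner_eq_right_le_left hpq hb hv hX)
  · exact sum_erase_filter_owner_eq_left_le_right hpq hb hv hX hfirst hg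

end Allocation

/-- For two agents with generalized binary valuations (all values in `{0, b}`,
`b > 0`) and goods arriving over `T` rounds, there is an allocation sequence
(cumulative bundles partitioning the goods arrived so far, monotone over time)
that is TEFX at every round. -/
theorem stmt15 {G : Type*} [Fintype G] [DecidableEq G] (T : ℕ) (b : ℝ) (hb : 0 < b)
    (round : G → Fin T) (v : Fin 2 → G → ℝ)
    (hv : ∀ (i : Fin 2) (g : G), v i g = 0 ∨ v i g = b) :
    ∃ A : Fin T → Fin 2 → Finset G,
      (∀ t : Fin T, A t 0 ∪ A t 1 = Finset.univ.filter (fun g => round g ≤ t)) ∧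
      (∀ t : Fin T, Disjoint (A t 0) (A t 1)) ∧
      (∀ t t' : Fin T, t ≤ t' → ∀ i : Fin 2, A t i ⊆ A t' i) ∧
      (∀ t : Fin T, ∀ i j : Fin 2, ∀ g ∈ A t j,
        ((A t j).erase g).sum (v i) ≤ (A t i).sum (v i)) := by
  obtain ⟨_, hround⟩ := exists_linearOrder_monotone round
  have harrived (t : Fin T) :
      IsLowerSet ((univ.filter fun g => round g ≤ t : Finset G) : Set G) :=
    fun g g' hg'g hg => by simpa using (hround hg'g).trans (by simpa using hg)
  obtain ⟨p, q, hpq, hfirst⟩ : ∃ p q : Fin 2, p ≠ q ∧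
      ∀ t g, v p g ≠ 0 ∧ v q g = 0 → round g ≤ t →
        ∃ g', (v q g' ≠ 0 ∧ v p g' = 0) ∧ round g' ≤ t := by
    rcases arrival_imp_arrival_or_converse round (fun g => v 0 g ≠ 0 ∧ v 1 g = 0)
      (fun g => v 1 g ≠ 0 ∧ v 0 g = 0) with h | h
    exacts [⟨0, 1, by decide, h⟩, ⟨1, 0, by decide, h⟩]
  refine ⟨fun t i => {g ∈ univ.filter (round · ≤ t) | owner v p q g = i}, fun t => ?_,
    fun t => ?_, fun t t' htt' i g => ?_, fun t i j g hg => ?_⟩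
  · ext g
    simp only [mem_union, mem_filter, mem_univ, true_and]
    omega
  · exact disjoint_filter.2 fun g _ h0 h1 => by omega
  · simp only [mem_filter, mem_univ, true_and]
    exact And.imp_left (le_trans · htt')
  -- `convert` reconciles the `DecidableEq G` instance with the one of the chosen order.
  · convert sum_erase_filter_owner_le hpq hb.le hv (harrived t) (fun g hg hgp hgq => ?_) i j hg
    obtain ⟨g', hg', hg't⟩ := hfirst t g ⟨hgp, hgq⟩ (by simpa using hg)
    exact ⟨g', by simpa using hg't, hg'⟩
end

section
/- For n agents with identical generalized binary additive valuations (common value v(g) ∈ {0, b}), the modified round-robin that gives positively-valued goods cyclically to agents 1..n and all zero-valued goods to agent n produces a TEFX allocation: at every prefix, for all i, j, and every g ∈ A_j, v(A_i) >= v(A_j \ {g}). -/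
/-!
Among the first `s` goods let `p` be the number of valuable ones. They are dealt round-robin, so
agent `a` holds `p / n + [a < p % n]` of them: two bundles differ by at most one good of value
`b`, and the last agent, who also collects every worthless good, holds the fewest valuable ones.
Hence removing a valuable good from any bundle, or any good from the last agent's bundle, leaves
at most the value of every other bundle.
-/

open Finset

section LinearOrder

variable {α : Type*} [LinearOrder α]

theorem Finset.strictMonoOn_card_filter_lt (S : Finset α) :
    StrictMonoOn (fun k => #{l ∈ S | l < k}) S := by
  intro k hk l _ hkl
  refine card_lt_card (ssubset_of_subset_of_ne ?_ fun h => ?_)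
  · exact monotone_filter_right S fun _ _ h => h.trans hkl
  · have : k ∈ ({l' ∈ S | l' < l} : Finset α) := mem_filter.mpr ⟨hk, hkl⟩
    simp [← h] at this

theorem Finset.image_card_filter_lt (S : Finset α) :
    S.image (fun k => #{l ∈ S | l < k}) = range #S := by
  refine eq_of_subset_of_card_le (fun t ht => ?_) ?_
  · obtain ⟨k, hk, rfl⟩ := mem_image.mp ht
    exact mem_range.mpr (card_lt_card (filter_ssubset.mpr ⟨k, hk, lt_irrefl k⟩))
  · rw [card_range, card_image_of_injOn (S.strictMonoOn_card_filter_lt.injOn)]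

section RoundRobin

variable {n : ℕ} {S : Finset α} {assign : α → Fin n}

theorem Finset.card_filter_roundRobin (h : ∀ k ∈ S, (assign k : ℕ) = #{l ∈ S | l < k} % n)
    (a : Fin n) :
    #{k ∈ S | assign k = a} = #S / n + if (a : ℕ) < #S % n then 1 else 0 := by
  have hfilter : {k ∈ S | assign k = a} = {k ∈ S | #{l ∈ S | l < k} ≡ a [MOD n]} :=
    filter_congr fun k hk => by rw [Fin.ext_iff, h k hk, Nat.ModEq, Nat.mod_eq_of_lt a.isLt]
  rw [← Nat.mod_eq_of_lt a.isLt, ← Nat.count_modEq_card _ a.pos, Nat.count_eq_card_filter_range,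
    ← image_card_filter_lt, filter_image, hfilter,
    card_image_of_injOn (S.strictMonoOn_card_filter_lt.injOn.mono (filter_subset _ _))]

theorem Finset.card_filter_roundRobin_le_succ
    (h : ∀ k ∈ S, (assign k : ℕ) = #{l ∈ S | l < k} % n) (i j : Fin n) :
    #{k ∈ S | assign k = j} ≤ #{k ∈ S | assign k = i} + 1 := by
  rw [card_filter_roundRobin h, card_filter_roundRobin h]
  split_ifs <;> omega

theorem Finset.card_filter_roundRobin_last_le
    (h : ∀ k ∈ S, (assign k : ℕ) = #{l ∈ S | l < k} % n) {j : Fin n} (hj : (j : ℕ) = n - 1)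
    (i : Fin n) : #{k ∈ S | assign k = j} ≤ #{k ∈ S | assign k = i} := by
  have : #S % n < n := Nat.mod_lt _ i.pos
  rw [card_filter_roundRobin h, card_filter_roundRobin h]
  split_ifs <;> omega

end RoundRobin

end LinearOrder

theorem Finset.sum_eq_card_filter_ne_zero_nsmul {ι M : Type*} [AddCommMonoid M] [DecidableEq M]
    (T : Finset ι) (f : ι → M) (b : M) (hf : ∀ k ∈ T, f k = 0 ∨ f k = b) :
    ∑ k ∈ T, f k = #{k ∈ T | f k ≠ 0} • b := by
  rw [← sum_filter_ne_zero, ← sum_const]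
  exact sum_congr rfl fun k hk => (hf k (filter_subset _ _ hk)).resolve_left (mem_filter.mp hk).2

theorem stmt16_general {G : Type*} [DecidableEq G] (n : ℕ)
    (b : ℝ) (hb : 0 < b) (m : ℕ) (goods : Fin m ↪ G) (v : G → ℝ)
    (hv : ∀ k : Fin m, v (goods k) = 0 ∨ v (goods k) = b)
    (assign : Fin m → Fin n)
    (hzero : ∀ k : Fin m, v (goods k) = 0 → (assign k : ℕ) = n - 1)
    (hpos : ∀ k : Fin m, v (goods k) = b → (assign k : ℕ) =
      (Finset.univ.filter
        (fun l : Fin m => (l : ℕ) < (k : ℕ) ∧ v (goods l) ≠ 0)).card % n) :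
    ∀ s : ℕ, ∀ i j : Fin n,
      ∀ g ∈ (Finset.univ.filter
          (fun k : Fin m => (k : ℕ) < s ∧ assign k = j)).image goods,
        (((Finset.univ.filter
            (fun k : Fin m => (k : ℕ) < s ∧ assign k = j)).image goods).erase g).sum v
          ≤ ((Finset.univ.filter
              (fun k : Fin m => (k : ℕ) < s ∧ assign k = i)).image goods).sum v := by
  intro s i j g hg
  set S : Finset (Fin m) := {k | (k : ℕ) < s ∧ v (goods k) ≠ 0}
  have hS : ∀ k ∈ S, (assign k : ℕ) = #{l ∈ S | l < k} % n := by
    intro k hk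
    rw [mem_filter] at hk
    rw [hpos k ((hv k).resolve_left hk.2.2), filter_filter]
    congr 2
    ext l
    simp only [mem_filter, mem_univ, true_and]
    exact ⟨fun h => ⟨⟨h.1.trans hk.2.1, h.2⟩, h.1⟩, fun h => ⟨h.2, h.1.2⟩⟩
  have hvalue : ∀ a : Fin n,
      ((Finset.univ.filter (fun k : Fin m => (k : ℕ) < s ∧ assign k = a)).image goods).sum v
        = #{k ∈ S | assign k = a} * b := by
    intro a
    rw [sum_image fun _ _ _ _ h => goods.injective h,
      sum_eq_card_filter_ne_zero_nsmul _ _ b fun k _ => hv k, nsmul_eq_mul, filter_filter,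
      filter_filter]
    congr 3
    ext k
    simp only [mem_filter]
    tauto
  obtain ⟨k, hk, rfl⟩ := mem_image.mp hg
  rw [sum_erase_eq_sub (mem_image_of_mem goods hk), hvalue, hvalue]
  rcases hv k with hk0 | hkb
  · have hj : (j : ℕ) = n - 1 := (mem_filter.mp hk).2.2 ▸ hzero k hk0
    rw [hk0, sub_zero]
    gcongr ?_ * b
    exact_mod_cast card_filter_roundRobin_last_le hS hj i
  · have : (#{k ∈ S | assign k = j} : ℝ) ≤ #{k ∈ S | assign k = i} + 1 := by
      exact_mod_cast card_filter_roundRobin_le_succ hS i j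
    rw [hkb]
    linarith [mul_le_mul_of_nonneg_right this hb.le]

/-- Identical generalized binary valuations: the modified round-robin that
allocates positively-valued goods cyclically to agents `0, 1, …, n-1` and all
zero-valued goods to agent `n-1` is TEFX at every prefix. Here `goods` is the
arrival order and `assign k` the receiver of the `k`-th good. -/
theorem stmt16 {G : Type*} [DecidableEq G] (n : ℕ) (hn : 0 < n)
    (b : ℝ) (hb : 0 < b) (m : ℕ) (goods : Fin m ↪ G) (v : G → ℝ)
    (hv : ∀ k : Fin m, v (goods k) = 0 ∨ v (goods k) = b)
    (assign : Fin m → Fin n)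
    (hzero : ∀ k : Fin m, v (goods k) = 0 → (assign k : ℕ) = n - 1)
    (hpos : ∀ k : Fin m, v (goods k) = b → (assign k : ℕ) =
      (Finset.univ.filter
        (fun l : Fin m => (l : ℕ) < (k : ℕ) ∧ v (goods l) ≠ 0)).card % n) :
    ∀ s : ℕ, ∀ i j : Fin n,
      ∀ g ∈ (Finset.univ.filter
          (fun k : Fin m => (k : ℕ) < s ∧ assign k = j)).image goods,
        (((Finset.univ.filter
            (fun k : Fin m => (k : ℕ) < s ∧ assign k = j)).image goods).erase g).sum v
          ≤ ((Finset.univ.filter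
              (fun k : Fin m => (k : ℕ) < s ∧ assign k = i)).image goods).sum v :=
  stmt16_general n b hb m goods v hv assign hzero hpos
end
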